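/- arXiv:1911.06867 — 2 statements merged into one kernel-verified Lean document; each statement's English description precedes it below -/
import Mathlib

section
/- Let $f : (0,\infty) \to [0,\infty)$ be Lebesgue integrable. Then $\int_0^\infty e^{(\mathrm{i}a - b)x} f(x)\,\mathrm{d}x \to 0$ as $|a| + b \to \infty$ over pairs $(a,b) \in \mathbb{R} \times [0,\infty)$. Precisely: for every $\varepsilon > 0$ there exists $M$ such that for all $a \in \mathbb{R}$ and $b \geq 0$ with $|a| + b \geq M$ one has $|\int_0^\infty e^{(\mathrm{i}a - b)x} f(x)\,\mathrm{d}x| < \varepsilon$. -/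
open MeasureTheory Complex
open Filter Set


-- abs of the exponential factor
-- extraction lemma
lemma aux_cocompact (g : ℝ → ℂ) (h : Filter.Tendsto g (Filter.cocompact ℝ) (nhds 0))
    {ε : ℝ} (hε : 0 < ε) : ∃ A : ℝ, ∀ a : ℝ, A ≤ |a| → ‖(g a)‖ < ε := by
  have h2 : {a : ℝ | dist (g a) 0 < ε} ∈ Filter.cocompact ℝ :=
    Metric.tendsto_nhds.mp h ε hε
  rw [Filter.mem_cocompact] at h2
  obtain ⟨K, hK, hKs⟩ := h2
  obtain ⟨r, hr⟩ := hK.isBounded.subset_closedBall 0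
  refine ⟨r + 1, fun a ha => ?_⟩
  have haK : a ∉ K := by
    intro haK
    have := hr haK
    rw [Metric.mem_closedBall, Real.dist_eq, sub_zero] at this
    linarith
  have := hKs haK
  simpa [Complex.dist_eq] using this

lemma aux_RL (h : ℝ → ℂ) :
    Filter.Tendsto (fun a : ℝ => ∫ x : ℝ, Complex.exp (a * x * Complex.I) * h x)
      (Filter.cocompact ℝ) (nhds 0) := by
  have T := Real.tendsto_integral_exp_smul_cocompact h
  have hπ : (2 * Real.pi) ≠ 0 := by positivity
  have comp : Filter.Tendsto (fun a : ℝ => -a * (2 * Real.pi)⁻¹)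
      (Filter.cocompact ℝ) (Filter.cocompact ℝ) := by
    have H : Homeomorph ℝ ℝ :=
      (Homeomorph.neg ℝ).trans (Homeomorph.mulRight₀ (2 * Real.pi)⁻¹ (by positivity))
    exact ((Homeomorph.neg ℝ).trans (Homeomorph.mulRight₀ (2 * Real.pi)⁻¹
      (by positivity))).toCocompactMap.cocompact_tendsto'
  have := T.comp comp
  convert this using 2 with a
  simp only [Function.comp_apply]
  congr 1
  funext x
  rw [Circle.smul_def, Real.fourierChar_apply]
  congr 1
  rw [show 2*Real.pi*(-(x*(-a*(2*Real.pi)⁻¹))) = a*x by field_simp]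
  push_cast
  ring

-- L3 : decay as b → ∞
lemma aux_btop (f : ℝ → ℝ) (hf_nonneg : ∀ x ∈ Set.Ioi (0:ℝ), 0 ≤ f x)
    (hf : IntegrableOn f (Set.Ioi (0:ℝ))) :
    Filter.Tendsto (fun b : ℝ => ∫ x in Set.Ioi (0:ℝ), Real.exp (-b*x) * f x)
      Filter.atTop (nhds 0) := by
  have h := MeasureTheory.tendsto_integral_filter_of_dominated_convergence
    (μ := volume.restrict (Set.Ioi (0:ℝ))) (F := fun (b : ℝ) x => Real.exp (-b*x) * f x)
    (f := fun _ => (0:ℝ)) (bound := fun x => |f x|) (l := Filter.atTop)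
    ?_ ?_ ?_ ?_
  · simpa using h
  · exact Filter.Eventually.of_forall fun b =>
      ((Real.continuous_exp.comp (by continuity)).aestronglyMeasurable).mul
        hf.aestronglyMeasurable
  · filter_upwards [Filter.eventually_ge_atTop (0:ℝ)] with b hb
    filter_upwards [ae_restrict_mem measurableSet_Ioi] with x hx
    rw [Real.norm_eq_abs, abs_mul, Real.abs_exp]
    calc Real.exp (-b*x) * |f x| ≤ 1 * |f x| := by
          apply mul_le_mul_of_nonneg_right _ (abs_nonneg _)
          apply Real.exp_le_one_iff.mpr
          have : (0:ℝ) < x := hx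
          nlinarith
      _ = |f x| := one_mul _
  · exact hf.abs
  · filter_upwards [ae_restrict_mem measurableSet_Ioi] with x hx
    have hx0 : (0:ℝ) < x := hx
    have h1 : Filter.Tendsto (fun b : ℝ => -b*x) Filter.atTop Filter.atBot := by
      apply Filter.Tendsto.atBot_mul_const hx0
      exact tendsto_neg_atTop_atBot
    have h2 := (Real.tendsto_exp_atBot.comp h1).mul_const (f x)
    simpa using h2

-- L2 : equicontinuity in b (with max trick so that it works along 𝓝 b₀)
lemma aux_cont (f : ℝ → ℝ) (hf_nonneg : ∀ x ∈ Set.Ioi (0:ℝ), 0 ≤ f x)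
    (hf : IntegrableOn f (Set.Ioi (0:ℝ))) (b₀ : ℝ) (hb₀ : 0 ≤ b₀) :
    Filter.Tendsto (fun b : ℝ => ∫ x in Set.Ioi (0:ℝ),
      |Real.exp (-(max b 0)*x) - Real.exp (-b₀*x)| * f x) (nhds b₀) (nhds 0) := by
  have h := MeasureTheory.tendsto_integral_filter_of_dominated_convergence
    (μ := volume.restrict (Set.Ioi (0:ℝ)))
    (F := fun (b : ℝ) x => |Real.exp (-(max b 0)*x) - Real.exp (-b₀*x)| * f x)
    (f := fun _ => (0:ℝ)) (bound := fun x => 2 * |f x|) (l := nhds b₀)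
    ?_ ?_ ?_ ?_
  · simpa using h
  · refine Filter.Eventually.of_forall fun b => ?_
    exact ((continuous_abs.comp ((Real.continuous_exp.comp (by continuity)).sub
      (Real.continuous_exp.comp (by continuity)))).aestronglyMeasurable).mul
      hf.aestronglyMeasurable
  · refine Filter.Eventually.of_forall fun b => ?_
    filter_upwards [ae_restrict_mem measurableSet_Ioi] with x hx
    have hx0 : (0:ℝ) < x := hx
    rw [Real.norm_eq_abs, abs_mul, _root_.abs_abs]
    have e1 : Real.exp (-(max b 0)*x) ≤ 1 := by
      apply Real.exp_le_one_iff.mpr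
      have : 0 ≤ max b 0 := le_max_right _ _
      nlinarith
    have e2 : Real.exp (-b₀*x) ≤ 1 := by
      apply Real.exp_le_one_iff.mpr; nlinarith
    have e3 : |Real.exp (-(max b 0)*x) - Real.exp (-b₀*x)| ≤ 2 := by
      rw [abs_sub_le_iff]
      constructor <;> nlinarith [Real.exp_pos (-(max b 0)*x), Real.exp_pos (-b₀*x)]
    nlinarith [abs_nonneg (f x), abs_nonneg (Real.exp (-(max b 0)*x) - Real.exp (-b₀*x))]
  · exact hf.abs.const_mul 2
  · filter_upwards [ae_restrict_mem measurableSet_Ioi] with x hx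
    have hc : Filter.Tendsto (fun b : ℝ => |Real.exp (-(max b 0)*x) - Real.exp (-b₀*x)| * f x)
        (nhds b₀) (nhds (|Real.exp (-(max b₀ 0)*x) - Real.exp (-b₀*x)| * f x)) := by
      apply Filter.Tendsto.mul_const
      apply Filter.Tendsto.abs
      apply Filter.Tendsto.sub _ tendsto_const_nhds
      apply Real.continuous_exp.continuousAt.tendsto.comp
      exact (((continuous_id.max continuous_const).neg.mul continuous_const).tendsto b₀)
    rw [max_eq_left hb₀] at hc
    simpa using hc

lemma aux_absexp (a b x : ℝ) :
    ‖(Complex.exp ((a * Complex.I - b) * x))‖ = Real.exp (-b*x) := by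
  rw [Complex.norm_exp]
  congr 1
  simp [Complex.mul_re]

lemma aux_integrable (f : ℝ → ℝ) (hf : IntegrableOn f (Set.Ioi (0:ℝ))) (a b : ℝ) (hb : 0 ≤ b) :
    Integrable (fun x : ℝ => Complex.exp ((a * Complex.I - b) * x) * (f x : ℂ))
      (volume.restrict (Set.Ioi (0:ℝ))) := by
  apply Integrable.mono' hf.abs
  · exact ((Complex.continuous_exp.comp (by continuity)).aestronglyMeasurable).mul
      (Complex.continuous_ofReal.comp_aestronglyMeasurable hf.aestronglyMeasurable)
  · filter_upwards [ae_restrict_mem measurableSet_Ioi] with x hx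
    have hx0 : (0:ℝ) < x := hx
    rw [norm_mul, aux_absexp, Complex.norm_real, Real.norm_eq_abs]
    calc Real.exp (-b*x) * |f x| ≤ 1 * |f x| := by
          apply mul_le_mul_of_nonneg_right _ (abs_nonneg _)
          apply Real.exp_le_one_iff.mpr; nlinarith
      _ = |f x| := one_mul _

-- L4
lemma aux_bound (f : ℝ → ℝ) (hf_nonneg : ∀ x ∈ Set.Ioi (0:ℝ), 0 ≤ f x)
    (hf : IntegrableOn f (Set.Ioi (0:ℝ))) (a b : ℝ) (hb : 0 ≤ b) :
    ‖(∫ x in Set.Ioi (0:ℝ), Complex.exp ((a * Complex.I - b) * x) * (f x : ℂ))‖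
      ≤ ∫ x in Set.Ioi (0:ℝ), Real.exp (-b*x) * f x := by
  apply MeasureTheory.norm_integral_le_of_norm_le
  · apply Integrable.mono' hf.abs
    · exact ((Real.continuous_exp.comp (by continuity)).aestronglyMeasurable).mul
        hf.aestronglyMeasurable
    · filter_upwards [ae_restrict_mem measurableSet_Ioi] with x hx
      have hx0 : (0:ℝ) < x := hx
      rw [Real.norm_eq_abs, abs_mul, Real.abs_exp]
      calc Real.exp (-b*x) * |f x| ≤ 1 * |f x| := by
            apply mul_le_mul_of_nonneg_right _ (abs_nonneg _)
            apply Real.exp_le_one_iff.mpr; nlinarith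
        _ = |f x| := one_mul _
  · filter_upwards [ae_restrict_mem measurableSet_Ioi] with x hx
    rw [norm_mul, aux_absexp, Complex.norm_real, Real.norm_eq_abs,
      _root_.abs_of_nonneg (hf_nonneg x hx)]

-- L5
lemma aux_diff (f : ℝ → ℝ) (hf_nonneg : ∀ x ∈ Set.Ioi (0:ℝ), 0 ≤ f x)
    (hf : IntegrableOn f (Set.Ioi (0:ℝ))) (a b b₀ : ℝ) (hb : 0 ≤ b) (hb₀ : 0 ≤ b₀) :
    ‖((∫ x in Set.Ioi (0:ℝ), Complex.exp ((a * Complex.I - b) * x) * (f x : ℂ)) -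
        ∫ x in Set.Ioi (0:ℝ), Complex.exp ((a * Complex.I - b₀) * x) * (f x : ℂ))‖
      ≤ ∫ x in Set.Ioi (0:ℝ), |Real.exp (-b*x) - Real.exp (-b₀*x)| * f x := by
  rw [← MeasureTheory.integral_sub (aux_integrable f hf a b hb) (aux_integrable f hf a b₀ hb₀)]
  apply MeasureTheory.norm_integral_le_of_norm_le
  · apply Integrable.mono' (hf.abs.const_mul 2)
    · exact ((continuous_abs.comp ((Real.continuous_exp.comp (by continuity)).sub
        (Real.continuous_exp.comp (by continuity)))).aestronglyMeasurable).mul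
        hf.aestronglyMeasurable
    · filter_upwards [ae_restrict_mem measurableSet_Ioi] with x hx
      have hx0 : (0:ℝ) < x := hx
      rw [Real.norm_eq_abs, abs_mul, _root_.abs_abs]
      have e1 : Real.exp (-b*x) ≤ 1 := Real.exp_le_one_iff.mpr (by nlinarith)
      have e2 : Real.exp (-b₀*x) ≤ 1 := Real.exp_le_one_iff.mpr (by nlinarith)
      have e3 : |Real.exp (-b*x) - Real.exp (-b₀*x)| ≤ 2 := by
        rw [abs_sub_le_iff]
        constructor <;> nlinarith [Real.exp_pos (-b*x), Real.exp_pos (-b₀*x)]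
      nlinarith [abs_nonneg (f x)]
  · filter_upwards [ae_restrict_mem measurableSet_Ioi] with x hx
    have key : Complex.exp ((a * Complex.I - b) * x) * (f x : ℂ) -
        Complex.exp ((a * Complex.I - b₀) * x) * (f x : ℂ) =
        Complex.exp (a * x * Complex.I) *
          (((Real.exp (-b*x) : ℝ) : ℂ) - ((Real.exp (-b₀*x) : ℝ) : ℂ)) * (f x : ℂ) := by
      have h1 : ((a : ℂ) * Complex.I - b) * x = a * x * Complex.I + ((-b*x : ℝ) : ℂ) := by
        push_cast; ring
      have h2 : ((a : ℂ) * Complex.I - b₀) * x = a * x * Complex.I + ((-b₀*x : ℝ) : ℂ) := by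
        push_cast; ring
      rw [h1, h2, Complex.exp_add, Complex.exp_add, Complex.ofReal_exp, Complex.ofReal_exp]
      ring
    rw [key, norm_mul, norm_mul, Complex.norm_exp]
    have hre : ((a : ℂ) * x * Complex.I).re = 0 := by simp
    rw [hre, Real.exp_zero, one_mul, ← Complex.ofReal_sub, Complex.norm_real,
      Real.norm_eq_abs, Complex.norm_real, Real.norm_eq_abs,
      _root_.abs_of_nonneg (hf_nonneg x hx)]

-- L6
lemma aux_indicator (f : ℝ → ℝ) (a b₀ : ℝ) :
    (∫ x in Set.Ioi (0:ℝ), Complex.exp ((a * Complex.I - b₀) * x) * (f x : ℂ)) =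
      ∫ x : ℝ, Complex.exp (a * x * Complex.I) *
        Set.indicator (Set.Ioi (0:ℝ)) (fun x => ((Real.exp (-b₀*x) * f x : ℝ) : ℂ)) x := by
  have h : (fun x : ℝ => Complex.exp (a * x * Complex.I) *
      Set.indicator (Set.Ioi (0:ℝ)) (fun x => ((Real.exp (-b₀*x) * f x : ℝ) : ℂ)) x) =
      Set.indicator (Set.Ioi (0:ℝ))
        (fun x => Complex.exp ((a * Complex.I - b₀) * x) * (f x : ℂ)) := by
    funext x
    by_cases hx : x ∈ Set.Ioi (0:ℝ)
    · rw [Set.indicator_of_mem hx, Set.indicator_of_mem hx]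
      have h1 : ((a : ℂ) * Complex.I - b₀) * x = a * x * Complex.I + ((-b₀*x : ℝ) : ℂ) := by
        push_cast; ring
      rw [h1, Complex.exp_add, ← Complex.ofReal_exp, Complex.ofReal_mul]
      ring
    · rw [Set.indicator_of_notMem hx, Set.indicator_of_notMem hx, mul_zero]
  rw [h, MeasureTheory.integral_indicator measurableSet_Ioi]

/-- For integrable `f : (0,∞) → [0,∞)`, the integral `∫_0^∞ e^{(ia-b)x} f(x) dx`
tends to `0` as `|a| + b → ∞` over pairs `(a, b) ∈ ℝ × [0, ∞)`. -/
theorem exp_density_integral_tendsto_zero (f : ℝ → ℝ)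
    (hf_nonneg : ∀ x ∈ Set.Ioi (0 : ℝ), 0 ≤ f x)
    (hf : IntegrableOn f (Set.Ioi (0 : ℝ))) :
    ∀ ε > 0, ∃ M : ℝ, ∀ a b : ℝ, 0 ≤ b → M ≤ |a| + b →
      ‖(∫ x in Set.Ioi (0 : ℝ),
        Complex.exp ((a * Complex.I - b) * x) * (f x : ℂ))‖ < ε := by
  intro ε hε
  classical
  -- Step A: a threshold for large b
  obtain ⟨B₁, hB₁⟩ := Filter.eventually_atTop.mp
    ((aux_btop f hf_nonneg hf).eventually_lt_const hε)
  set B₀ : ℝ := max B₁ 0 with hB₀def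
  have hB₀nn : (0:ℝ) ≤ B₀ := le_max_right _ _
  -- Step B: Riemann-Lebesgue thresholds for each b₀ ∈ [0, B₀]
  set P : ℝ → Prop := fun b₀ => ∃ A : ℝ, ∀ a : ℝ, A ≤ |a| →
    ‖(∫ x in Set.Ioi (0:ℝ),
      Complex.exp ((a * Complex.I - b₀) * x) * (f x : ℂ))‖ < ε/2 with hPdef
  have hP : ∀ b₀ ∈ Set.Icc (0:ℝ) B₀, P b₀ := by
    intro b₀ _
    have hRL := aux_RL (Set.indicator (Set.Ioi (0:ℝ))
      (fun x => ((Real.exp (-b₀*x) * f x : ℝ) : ℂ)))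
    have heq : (fun a : ℝ => ∫ x : ℝ, Complex.exp (a * x * Complex.I) *
        Set.indicator (Set.Ioi (0:ℝ)) (fun x => ((Real.exp (-b₀*x) * f x : ℝ) : ℂ)) x) =
        fun a : ℝ => ∫ x in Set.Ioi (0:ℝ),
          Complex.exp ((a * Complex.I - b₀) * x) * (f x : ℂ) := by
      funext a
      exact (aux_indicator f a b₀).symm
    rw [heq] at hRL
    exact aux_cocompact _ hRL (half_pos hε)
  set F : ℝ → ℝ := fun b₀ => if h : P b₀ then h.choose else 0 with hFdef
  have hF : ∀ b₀, P b₀ → ∀ a : ℝ, F b₀ ≤ |a| →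
      ‖(∫ x in Set.Ioi (0:ℝ),
        Complex.exp ((a * Complex.I - b₀) * x) * (f x : ℂ))‖ < ε/2 := by
    intro b₀ h a ha
    rw [hFdef] at ha
    simp only [dif_pos h] at ha
    exact h.choose_spec a ha
  -- covering [0, B₀]
  set U : ℝ → Set ℝ := fun b₀ => {b : ℝ | ∫ x in Set.Ioi (0:ℝ),
    |Real.exp (-(max b 0)*x) - Real.exp (-b₀*x)| * f x < ε/2} with hUdef
  have hU : ∀ b₀ ∈ Set.Icc (0:ℝ) B₀, U b₀ ∈ nhds b₀ := fun b₀ hb₀ =>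
    (aux_cont f hf_nonneg hf b₀ hb₀.1).eventually_lt_const (half_pos hε)
  obtain ⟨t, htsub, htcov⟩ :=
    (isCompact_Icc (a := (0:ℝ)) (b := B₀)).elim_nhds_subcover U hU
  obtain ⟨A₀, hA₀⟩ : ∃ A₀ : ℝ, ∀ b₀ ∈ t, F b₀ ≤ A₀ := by
    obtain ⟨A₀, hA₀⟩ := (t.image F).finite_toSet.bddAbove
    exact ⟨A₀, fun b₀ hb₀ => hA₀ (Finset.mem_coe.mpr (Finset.mem_image_of_mem F hb₀))⟩
  refine ⟨A₀ + B₀ + 1, fun a b hb hM => ?_⟩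
  by_cases hbB : B₀ ≤ b
  · exact lt_of_le_of_lt (aux_bound f hf_nonneg hf a b hb)
      (hB₁ b (le_trans (le_max_left _ _) hbB))
  · have hbB' : b < B₀ := lt_of_not_ge hbB
    have hbIcc : b ∈ Set.Icc (0:ℝ) B₀ := ⟨hb, le_of_lt hbB'⟩
    obtain ⟨b₀, hb₀t, hbU⟩ := Set.mem_iUnion₂.mp (htcov hbIcc)
    have hb₀Icc : b₀ ∈ Set.Icc (0:ℝ) B₀ := htsub b₀ hb₀t
    have haA : A₀ + 1 ≤ |a| := by linarith
    have h1 : ‖((∫ x in Set.Ioi (0:ℝ),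
        Complex.exp ((a * Complex.I - b) * x) * (f x : ℂ)) -
        ∫ x in Set.Ioi (0:ℝ), Complex.exp ((a * Complex.I - b₀) * x) * (f x : ℂ))‖ < ε/2 := by
      refine lt_of_le_of_lt (aux_diff f hf_nonneg hf a b b₀ hb hb₀Icc.1) ?_
      have hb' : ∫ x in Set.Ioi (0:ℝ),
          |Real.exp (-(max b 0)*x) - Real.exp (-b₀*x)| * f x < ε/2 := hbU
      rwa [max_eq_left hb] at hb'
    have h2 : ‖(∫ x in Set.Ioi (0:ℝ),
        Complex.exp ((a * Complex.I - b₀) * x) * (f x : ℂ))‖ < ε/2 :=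
      hF b₀ (hP b₀ hb₀Icc) a (le_trans (by linarith [hA₀ b₀ hb₀t]) haA)
    calc ‖(∫ x in Set.Ioi (0:ℝ),
          Complex.exp ((a * Complex.I - b) * x) * (f x : ℂ))‖
        ≤ ‖((∫ x in Set.Ioi (0:ℝ),
            Complex.exp ((a * Complex.I - b) * x) * (f x : ℂ)) -
            ∫ x in Set.Ioi (0:ℝ), Complex.exp ((a * Complex.I - b₀) * x) * (f x : ℂ))‖ +
          ‖(∫ x in Set.Ioi (0:ℝ),
            Complex.exp ((a * Complex.I - b₀) * x) * (f x : ℂ))‖ := by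
          have := norm_add_le ((∫ x in Set.Ioi (0:ℝ),
            Complex.exp ((a * Complex.I - b) * x) * (f x : ℂ)) -
            ∫ x in Set.Ioi (0:ℝ), Complex.exp ((a * Complex.I - b₀) * x) * (f x : ℂ))
            (∫ x in Set.Ioi (0:ℝ), Complex.exp ((a * Complex.I - b₀) * x) * (f x : ℂ))
          simpa using this
      _ < ε/2 + ε/2 := add_lt_add h1 h2
      _ = ε := add_halves ε
end

section
/- Let $X, Y, Z$ be non-negative real random variables such that $X$ is independent of $Y$ and $X$ is independent of $Z$. If $X + Y$ and $X + Z$ have the same distribution, then $Y$ and $Z$ have the same distribution. -/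
/-!
Independence factors the Laplace transform, `𝔼[e^{-s(X+Y)}] = 𝔼[e^{-sX}] 𝔼[e^{-sY}]`, and the
factor `𝔼[e^{-sX}]` is positive, so `Y` and `Z` have the same Laplace transform on `s ≥ 0`. At
`s = n ∈ ℕ` these are the moments of `e^{-Y}` and `e^{-Z}`, which take values in `[0, 1]`; by
Weierstrass approximation a finite measure on `[0, 1]` is determined by its moments, and
`y ↦ e^{-y}` is injective on `[0, ∞)`.
-/

open MeasureTheory ProbabilityTheory unitInterval

theorem ContinuousMap.continuous_integral {X : Type*} [TopologicalSpace X] [CompactSpace X]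
    [MeasurableSpace X] [BorelSpace X] (μ : Measure X) [IsFiniteMeasure μ] :
    Continuous fun g : C(X, ℝ) => ∫ x, g x ∂μ := by
  convert MeasureTheory.continuous_integral.comp (toLp (E := ℝ) 1 μ ℝ).continuous using 2 with g
  exact integral_congr_ae (ContinuousMap.coeFn_toLp μ g).symm

namespace unitInterval

theorem integrable_polynomial_eval (μ : Measure I) [IsFiniteMeasure μ] (p : Polynomial ℝ) :
    Integrable (fun x : I => p.eval (x : ℝ)) μ :=
  (p.continuous.comp continuous_subtype_val).integrable_of_hasCompactSupport
    (.of_compactSpace _)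

theorem ext_of_integral_pow_eq {μ ν : Measure I} [IsFiniteMeasure μ] [IsFiniteMeasure ν]
    (h : ∀ n : ℕ, ∫ x, (x : ℝ) ^ n ∂μ = ∫ x, (x : ℝ) ^ n ∂ν) : μ = ν := by
  have hpoly (p : Polynomial ℝ) : ∫ x : I, p.eval (x : ℝ) ∂μ = ∫ x : I, p.eval (x : ℝ) ∂ν := by
    induction p using Polynomial.induction_on' with
    | add p q hp hq =>
      simp only [Polynomial.eval_add]
      rw [integral_add (integrable_polynomial_eval μ p) (integrable_polynomial_eval μ q),
        integral_add (integrable_polynomial_eval ν p) (integrable_polynomial_eval ν q), hp, hq]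
    | monomial n a => simp only [Polynomial.eval_monomial, integral_const_mul, h n]
  have hdense : Dense (polynomialFunctions I : Set C(I, ℝ)) := by
    rw [dense_iff_closure_eq, ← Subalgebra.topologicalClosure_coe,
      polynomialFunctions_closure_eq_top']
    rfl
  have hcont : ∀ g : C(I, ℝ), ∫ x, g x ∂μ = ∫ x, g x ∂ν := by
    refine congrFun (Continuous.ext_on hdense (ContinuousMap.continuous_integral μ)
      (ContinuousMap.continuous_integral ν) ?_)
    rintro _ ⟨p, -, rfl⟩
    exact hpoly p
  exact ext_of_forall_integral_eq_of_IsFiniteMeasure fun f => hcont f.toContinuousMap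

end unitInterval

theorem MeasureTheory.Measure.ext_of_mgf_neg_nat_eq {μ ν : Measure ℝ} [IsFiniteMeasure μ]
    [IsFiniteMeasure ν] (hμ : ∀ᵐ x ∂μ, 0 ≤ x) (hν : ∀ᵐ x ∂ν, 0 ≤ x)
    (h : ∀ n : ℕ, mgf id μ (-n) = mgf id ν (-n)) : μ = ν := by
  set e : ℝ → I := fun x => Set.projIcc 0 1 zero_le_one (Real.exp (-x))
  have he : Measurable e := (continuous_projIcc.comp (by fun_prop)).measurable
  have he_coe {x : ℝ} (hx : 0 ≤ x) : (e x : ℝ) = Real.exp (-x) :=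
    congrArg Subtype.val (Set.projIcc_of_mem _ ⟨(Real.exp_pos _).le, by simpa using hx⟩)
  have hmoment (m : Measure ℝ) (hm : ∀ᵐ x ∂m, 0 ≤ x) (n : ℕ) :
      ∫ y : I, (y : ℝ) ^ n ∂m.map e = mgf id m (-n) := by
    rw [integral_map he.aemeasurable (by fun_prop), mgf]
    refine integral_congr_ae (hm.mono fun x hx => ?_)
    simp only [he_coe hx, ← Real.exp_nat_mul, id, neg_mul, mul_neg]
  have hmap : μ.map e = ν.map e := by
    have := Measure.isFiniteMeasure_map μ e
    have := Measure.isFiniteMeasure_map ν e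
    refine unitInterval.ext_of_integral_pow_eq fun n => ?_
    rw [hmoment μ hμ, hmoment ν hν, h n]
  have hrecover (m : Measure ℝ) (hm : ∀ᵐ x ∂m, 0 ≤ x) :
      (m.map e).map (fun y : I => -Real.log y) = m := by
    rw [Measure.map_map (by fun_prop) he]
    conv_rhs => rw [← Measure.map_id (μ := m)]
    refine Measure.map_congr (hm.mono fun x hx => ?_)
    simp [e, he_coe hx]
  rw [← hrecover μ hμ, hmap, hrecover ν hν]

namespace ProbabilityTheory

variable {Ω : Type*} [MeasurableSpace Ω] {μ : Measure Ω}

theorem integrable_exp_mul_of_nonpos_of_ae_nonneg [IsFiniteMeasure μ] {X : Ω → ℝ} {t : ℝ}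
    (ht : t ≤ 0) (hX : AEMeasurable X μ) (hX_nonneg : ∀ᵐ ω ∂μ, 0 ≤ X ω) :
    Integrable (fun ω => Real.exp (t * X ω)) μ := by
  simpa using integrable_exp_mul_of_le (-t) 0 (neg_nonneg.2 ht) hX.neg
    (hX_nonneg.mono fun ω hω => neg_nonpos.2 hω)

theorem mgf_eq_of_indepFun_of_map_add_eq [NeZero μ] {X Y Z : Ω → ℝ} {t : ℝ}
    (hX : AEMeasurable X μ) (hY : AEMeasurable Y μ) (hZ : AEMeasurable Z μ)
    (hXY : IndepFun X Y μ) (hXZ : IndepFun X Z μ) (hsum : μ.map (X + Y) = μ.map (X + Z))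
    (ht : Integrable (fun ω => Real.exp (t * X ω)) μ) :
    mgf Y μ t = mgf Z μ t := by
  have h := congrFun (congrArg (mgf id) hsum) t
  rw [mgf_id_map (hX.add hY), mgf_id_map (hX.add hZ),
    hXY.mgf_add' hX.aestronglyMeasurable hY.aestronglyMeasurable,
    hXZ.mgf_add' hX.aestronglyMeasurable hZ.aestronglyMeasurable] at h
  exact mul_left_cancel₀ (mgf_pos' (NeZero.ne μ) ht).ne' h

end ProbabilityTheory

/-- If `X` is independent of `Y` and of `Z`, all nonnegative, and `X + Y` has the same
distribution as `X + Z`, then `Y` and `Z` have the same distribution. -/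
theorem cancel_independent_nonneg_summand
    {Ω : Type*} [MeasureSpace Ω] [IsProbabilityMeasure (ℙ : Measure Ω)]
    (X Y Z : Ω → ℝ) (hX : Measurable X) (hY : Measurable Y) (hZ : Measurable Z)
    (hXnn : ∀ᵐ ω ∂ℙ, 0 ≤ X ω) (hYnn : ∀ᵐ ω ∂ℙ, 0 ≤ Y ω) (hZnn : ∀ᵐ ω ∂ℙ, 0 ≤ Z ω)
    (hXY : IndepFun X Y ℙ) (hXZ : IndepFun X Z ℙ)
    (hsum : Measure.map (fun ω => X ω + Y ω) ℙ = Measure.map (fun ω => X ω + Z ω) ℙ) :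
    Measure.map Y ℙ = Measure.map Z ℙ := by
  have hmap_nonneg {W : Ω → ℝ} (hW : Measurable W) (hWnn : ∀ᵐ ω ∂ℙ, 0 ≤ W ω) :
      ∀ᵐ x ∂(Measure.map W ℙ), 0 ≤ x :=
    (ae_map_iff hW.aemeasurable measurableSet_Ici).2 hWnn
  refine Measure.ext_of_mgf_neg_nat_eq (hmap_nonneg hY hYnn) (hmap_nonneg hZ hZnn) fun n => ?_
  rw [mgf_id_map hY.aemeasurable, mgf_id_map hZ.aemeasurable]
  exact mgf_eq_of_indepFun_of_map_add_eq hX.aemeasurable hY.aemeasurable hZ.aemeasurable hXY hXZ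
    hsum (integrable_exp_mul_of_nonpos_of_ae_nonneg (by simp) hX.aemeasurable hXnn)
end
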